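/- arXiv:2605.31243 — 4 statements merged into one kernel-verified Lean document; each statement's English description precedes it below -/
import Mathlib

section
/- RSS longitudinal safety: let a front vehicle at position x_f with speed v_f ≥ 0 brake with constant rate b_max < 0 until it stops, and let the rear vehicle at position x_r < x_f with speed v_r ≥ 0 continue with constant acceleration a_max > 0 for a delay time ρ ≥ 0, then brake with rate b_min (with b_max ≤ b_min < 0) until it stops. If x_f - x_r > v_r·ρ + (1/2)·a_max·ρ² - (v_r + a_max·ρ)²/(2·b_min) + v_f²/(2·b_max), then x_r(t) < x_f(t) for all t ≥ 0 (no rear-end collision). -/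
private lemma quad_right (A B C a b : ℝ) (hC : C ≤ 0) (hab : a ≤ b) (hd : 0 ≤ B + 2*C*b) :
    A + B*a + C*a^2 ≤ A + B*b + C*b^2 := by
  nlinarith [mul_nonneg (mul_nonneg (neg_nonneg.2 hC) (sub_nonneg.2 hab)) (sub_nonneg.2 hab),
    mul_nonneg (sub_nonneg.2 hab) hd]

private lemma quad_left (A B C a b : ℝ) (hC : C ≤ 0) (hab : a ≤ b) (hd : B + 2*C*a ≤ 0) :
    A + B*b + C*b^2 ≤ A + B*a + C*a^2 := by
  nlinarith [mul_nonneg (mul_nonneg (neg_nonneg.2 hC) (sub_nonneg.2 hab)) (sub_nonneg.2 hab),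
    mul_nonneg (sub_nonneg.2 hab) (neg_nonneg.2 hd)]

private lemma rear_phase1_le (xr vr amax ρ s q : ℝ) (hvr : 0 ≤ vr) (hamax : 0 ≤ amax)
    (hs : 0 ≤ s) (h1 : s ≤ ρ) (hq : q ≤ 0) :
    xr + vr*s + (1/2)*amax*s^2 ≤ xr + vr*ρ + (1/2)*amax*ρ^2 - q := by
  nlinarith [mul_nonneg hvr (sub_nonneg.2 h1),
    mul_nonneg (mul_nonneg hamax (sub_nonneg.2 h1)) (by linarith : (0:ℝ) ≤ ρ + s)]

private lemma rear_phase2_le (x w bmin s ρ q : ℝ) (hbmin : bmin < 0)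
    (hE : q * (2*bmin) = w^2) :
    x + w*(s-ρ) + (1/2)*bmin*(s-ρ)^2 ≤ x - q := by
  nlinarith [sq_nonneg (w + bmin*(s-ρ)), hbmin]

set_option maxHeartbeats 2000000 in
theorem rss_longitudinal_safety
    (Xf Xr : ℝ → ℝ) (xf xr vf vr bmax bmin amax ρ : ℝ)
    (hvf : 0 ≤ vf) (hvr : 0 ≤ vr) (hbmax : bmax < 0)
    (hbb : bmax ≤ bmin) (hbmin : bmin < 0) (hamax : 0 < amax) (hρ : 0 ≤ ρ)
    (hpos : xr < xf)
    (hXf : ∀ t, Xf t =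
      if t ≤ -vf / bmax then xf + vf * t + (1/2) * bmax * t ^ 2
      else xf - vf ^ 2 / (2 * bmax))
    (hXr : ∀ t, Xr t =
      if t ≤ ρ then xr + vr * t + (1/2) * amax * t ^ 2
      else if t ≤ ρ - (vr + amax * ρ) / bmin then
        (xr + vr * ρ + (1/2) * amax * ρ ^ 2) + (vr + amax * ρ) * (t - ρ)
          + (1/2) * bmin * (t - ρ) ^ 2
      else (xr + vr * ρ + (1/2) * amax * ρ ^ 2)
          - (vr + amax * ρ) ^ 2 / (2 * bmin))
    (hsafe : xf - xr >
      vr * ρ + (1/2) * amax * ρ ^ 2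
        - (vr + amax * ρ) ^ 2 / (2 * bmin) + vf ^ 2 / (2 * bmax)) :
    ∀ t, 0 ≤ t → Xr t < Xf t := by
  intro t ht
  have hbmax0 : bmax ≠ 0 := ne_of_lt hbmax
  have hbmin0 : bmin ≠ 0 := ne_of_lt hbmin
  set w : ℝ := vr + amax * ρ with hwdef
  have hw : 0 ≤ w := by nlinarith [mul_nonneg hamax.le hρ]
  set Tf : ℝ := -vf / bmax with hTfdef
  set Tr : ℝ := ρ - w / bmin with hTrdef
  clear_value w Tf Tr
  have hTfc : bmax * Tf = -vf := by rw [hTfdef]; field_simp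
  have hTrc : bmin * (Tr - ρ) = -w := by rw [hTrdef]; field_simp; ring
  have hTf0 : 0 ≤ Tf := by
    rw [hTfdef, div_nonneg_iff]; right; exact ⟨by linarith, hbmax.le⟩
  have hTrρ : ρ ≤ Tr := by
    have : w / bmin ≤ 0 := div_nonpos_of_nonneg_of_nonpos hw hbmin.le
    rw [hTrdef]; linarith
  have hqw : w ^ 2 / (2 * bmin) ≤ 0 :=
    div_nonpos_of_nonneg_of_nonpos (sq_nonneg _) (by linarith)
  have hqf : vf ^ 2 / (2 * bmax) ≤ 0 :=
    div_nonpos_of_nonneg_of_nonpos (sq_nonneg _) (by linarith)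
  have hEw : w ^ 2 / (2 * bmin) * (2 * bmin) = w ^ 2 :=
    div_mul_cancel₀ _ (mul_ne_zero two_ne_zero hbmin0)
  have hEf : vf ^ 2 / (2 * bmax) * (2 * bmax) = vf ^ 2 :=
    div_mul_cancel₀ _ (mul_ne_zero two_ne_zero hbmax0)
  have hTfval : vf * Tf + (1/2)*bmax*Tf^2 = -(vf^2/(2*bmax)) := by
    rw [hTfdef]; field_simp; ring
  have hTrval : w * (Tr - ρ) + (1/2)*bmin*(Tr-ρ)^2 = -(w^2/(2*bmin)) := by
    rw [hTrdef]; field_simp; ring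
  have hXinf : xr + vr*ρ + (1/2)*amax*ρ^2 - w^2/(2*bmin) < xf - vf^2/(2*bmax) := by
    linarith
  -- the rear vehicle never goes beyond its final position
  have hXrle : ∀ s, 0 ≤ s → Xr s ≤ xr + vr*ρ + (1/2)*amax*ρ^2 - w^2/(2*bmin) := by
    intro s hs
    rw [hXr s]
    split_ifs with h1 h2
    · exact rear_phase1_le xr vr amax ρ s _ hvr hamax.le hs h1 hqw
    · have := rear_phase2_le (xr + vr*ρ + (1/2)*amax*ρ^2) w bmin s ρ (w^2/(2*bmin)) hbmin hEw
      linarith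
    · linarith
  rcases le_or_gt t Tf with h2 | h2
  case inr =>
    rw [hXf t, if_neg (not_le.2 h2)]
    exact lt_of_le_of_lt (hXrle t ht) hXinf
  -- front still moving: Xf t = parabola
  have hft : 0 ≤ vf + bmax * t := by
    have hmul : bmax * (Tf - t) ≤ 0 :=
      mul_nonpos_iff.2 (Or.inr ⟨hbmax.le, sub_nonneg.2 h2⟩)
    nlinarith [hTfc]
  rw [hXf t, if_pos h2, hXr t]
  split_ifs with ht1 ht2
  · -- phase 1 : t ≤ ρ
    rcases le_or_gt (vr + amax*t) (vf + bmax*t) with huv | huv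
    · have h := quad_right (xf - xr) (vf - vr) ((1/2)*(bmax - amax)) 0 t
        (by linarith) ht (by linarith)
      linarith [hpos, h]
    · rcases le_or_gt Tf ρ with hTfρ | hTfρ
      · -- front stops within phase 1
        have hmax := hXrle Tf hTf0
        rw [hXr Tf, if_pos hTfρ] at hmax
        have h := quad_left (xf - xr) (vf - vr) ((1/2)*(bmax - amax)) t Tf
          (by linarith) h2 (by linarith)
        linarith [hXinf, hTfval, hmax, h]
      · rcases le_or_gt Tr Tf with hcase | hcase
        · -- impossible: relative speed would be negative at Tr while front formula nonneg
          exfalso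
          have hfTr : 0 ≤ vf + bmax * Tr := by
            have hmul : bmax * (Tf - Tr) ≤ 0 :=
              mul_nonpos_iff.2 (Or.inr ⟨hbmax.le, sub_nonneg.2 hcase⟩)
            nlinarith [hTfc]
          have d2 : (0:ℝ) ≤ (amax - bmax) * (ρ - t) :=
            mul_nonneg (by linarith) (by linarith)
          have d3 : (0:ℝ) ≤ (bmin - bmax) * (Tr - ρ) :=
            mul_nonneg (by linarith) (by linarith)
          nlinarith [hTrc, hfTr, d2, d3, huv]
        · -- rear brakes past Tf (Tf < Tr), walk forward t → ρ → Tf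
          have hmax := hXrle Tf hTf0
          rw [hXr Tf, if_neg (not_le.2 hTfρ), if_pos hcase.le] at hmax
          have s1 := quad_left (xf - xr) (vf - vr) ((1/2)*(bmax - amax)) t ρ
            (by linarith) ht1 (by linarith)
          have hd2 : vf - w + bmin*ρ + 2*((1/2)*(bmax - bmin))*ρ ≤ 0 := by
            nlinarith [mul_nonneg (by linarith : (0:ℝ) ≤ amax - bmax) (sub_nonneg.2 ht1)]
          have s2 := quad_left (xf - xr - vr*ρ - (1/2)*amax*ρ^2 + w*ρ - (1/2)*bmin*ρ^2)
            (vf - w + bmin*ρ) ((1/2)*(bmax - bmin)) ρ Tf (by linarith) hTfρ.le hd2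
          linarith [s1, s2, hmax, hXinf, hTfval]
  · -- phase 2 : ρ < t ≤ Tr
    have htρ : ρ ≤ t := (not_le.1 ht1).le
    rcases le_or_gt (w + bmin*(t-ρ)) (vf + bmax*t) with huv | huv
    · -- walk back t → ρ → 0
      have s1 := quad_right (xf - xr - vr*ρ - (1/2)*amax*ρ^2 + w*ρ - (1/2)*bmin*ρ^2)
        (vf - w + bmin*ρ) ((1/2)*(bmax - bmin)) ρ t (by linarith) htρ (by nlinarith)
      have hd : 0 ≤ (vf - vr) + 2*((1/2)*(bmax - amax))*ρ := by
        nlinarith [mul_nonneg (by linarith : (0:ℝ) ≤ bmin - bmax) (sub_nonneg.2 htρ)]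
      have s2 := quad_right (xf - xr) (vf - vr) ((1/2)*(bmax - amax)) 0 ρ
        (by linarith) hρ hd
      linarith [hpos, s1, s2]
    · rcases le_or_gt Tr Tf with hcase | hcase
      · exfalso
        have hfTr : 0 ≤ vf + bmax * Tr := by
          have hmul : bmax * (Tf - Tr) ≤ 0 :=
            mul_nonpos_iff.2 (Or.inr ⟨hbmax.le, sub_nonneg.2 hcase⟩)
          nlinarith [hTfc]
        have d3 : (0:ℝ) ≤ (bmin - bmax) * (Tr - t) :=
          mul_nonneg (by linarith) (by linarith)
        nlinarith [hTrc, hfTr, d3, huv]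
      · -- Tf < Tr : walk forward t → Tf within phase 2
        have hmax := hXrle Tf hTf0
        rw [hXr Tf, if_neg (not_le.2 (lt_of_lt_of_le (not_le.1 ht1) h2)), if_pos hcase.le] at hmax
        have s1 := quad_left (xf - xr - vr*ρ - (1/2)*amax*ρ^2 + w*ρ - (1/2)*bmin*ρ^2)
          (vf - w + bmin*ρ) ((1/2)*(bmax - bmin)) t Tf (by linarith) h2 (by nlinarith)
        linarith [s1, hmax, hXinf, hTfval]
  · -- phase 3 : Tr < t ≤ Tf, rear stopped
    have htTr : Tr ≤ t := (not_le.1 ht2).le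
    have hfTr : 0 ≤ vf + bmax * Tr := by
      have hmul : bmax * (t - Tr) ≤ 0 :=
        mul_nonpos_iff.2 (Or.inr ⟨hbmax.le, sub_nonneg.2 htTr⟩)
      nlinarith [hft]
    have s0 := quad_right xf vf ((1/2)*bmax) Tr t (by linarith) htTr (by linarith [hft])
    have s1 := quad_right (xf - xr - vr*ρ - (1/2)*amax*ρ^2 + w*ρ - (1/2)*bmin*ρ^2)
      (vf - w + bmin*ρ) ((1/2)*(bmax - bmin)) ρ Tr (by linarith) hTrρ
      (by nlinarith [hTrc, hfTr])
    have hd : 0 ≤ (vf - vr) + 2*((1/2)*(bmax - amax))*ρ := by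
      nlinarith [mul_nonneg (by linarith : (0:ℝ) ≤ bmin - bmax) (sub_nonneg.2 hTrρ), hTrc, hfTr]
    have s2 := quad_right (xf - xr) (vf - vr) ((1/2)*(bmax - amax)) 0 ρ
      (by linarith) hρ hd
    linarith [s0, s1, s2, hpos, hTrval]
end

section
/- NMAC separation preservation: let two vehicles f and r have positions x_f, x_r with speeds bounded in [vmin, vmax] (0 < vmin ≤ vmax). Suppose at time t₀ the separation satisfies x_f(t₀) - x_r(t₀) ≥ D + (vmax - vmin)·ρ for some D ≥ 0, ρ ≥ 0. Then for all t ∈ [t₀, t₀ + ρ], x_f(t) - x_r(t) ≥ D. -/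
theorem nmac_separation_preserved
    (xf xr vfun wfun : ℝ → ℝ) (t₀ ρ D vmin vmax : ℝ)
    (hvmin : 0 < vmin) (hvv : vmin ≤ vmax) (hD : 0 ≤ D) (hρ : 0 ≤ ρ)
    (hxf : ∀ t ∈ Set.Icc t₀ (t₀ + ρ), HasDerivAt xf (vfun t) t)
    (hxr : ∀ t ∈ Set.Icc t₀ (t₀ + ρ), HasDerivAt xr (wfun t) t)
    (hvf : ∀ t ∈ Set.Icc t₀ (t₀ + ρ), vmin ≤ vfun t ∧ vfun t ≤ vmax)
    (hvr : ∀ t ∈ Set.Icc t₀ (t₀ + ρ), vmin ≤ wfun t ∧ wfun t ≤ vmax)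
    (hsep : xf t₀ - xr t₀ ≥ D + (vmax - vmin) * ρ) :
    ∀ t ∈ Set.Icc t₀ (t₀ + ρ), xf t - xr t ≥ D := by
  intro t ht
  have hkey : ‖(xf t - xr t) - (xf t₀ - xr t₀)‖ ≤ (vmax - vmin) * ‖t - t₀‖ := by
    apply Convex.norm_image_sub_le_of_norm_hasDerivWithin_le
      (f := fun s => xf s - xr s) (f' := fun s => vfun s - wfun s)
      (fun x hx => ((hxf x hx).sub (hxr x hx)).hasDerivWithinAt)
      (fun x hx => ?_) (convex_Icc _ _)
      (Set.left_mem_Icc.2 (by linarith)) ht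
    have h1 := hvf x hx
    have h2 := hvr x hx
    rw [Real.norm_eq_abs, abs_le]
    constructor <;> linarith [h1.1, h1.2, h2.1, h2.2]
  rw [Real.norm_eq_abs, Real.norm_eq_abs] at hkey
  have ht1 := ht.1
  have ht2 := ht.2
  have habs : |t - t₀| ≤ ρ := by rw [abs_of_nonneg (by linarith)]; linarith
  have h2 : (xf t₀ - xr t₀) - (xf t - xr t) ≤ |(xf t - xr t) - (xf t₀ - xr t₀)| := by
    rw [abs_sub_comm]; exact le_abs_self _
  have h3 : (vmax - vmin) * |t - t₀| ≤ (vmax - vmin) * ρ :=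
    mul_le_mul_of_nonneg_left habs (by linarith)
  linarith
end

section
/- Border-case sufficiency: let x_f and x_r be trajectories with x_f(t_f) = 0, x_f(t_f + τ_f) = L, x_r(t_r) = 0, x_r(t_r + τ_r) = L, speeds in [vmin, vmax] (0 < vmin ≤ vmax), and t_f ≤ t_r. If for all t ∈ [t_r, t_f + τ_f] the lower border of f strictly exceeds the upper border of r, i.e., max(vmin·(t - t_f), L - vmax·(t_f + τ_f - t)) > min(vmax·(t - t_r), L - vmin·(t_r + τ_r - t)), then x_r(t) < x_f(t) for all t ∈ [t_r, t_f + τ_f] ∩ [t_r, t_r + τ_r]. -/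
open Set

/-! A trajectory starting at `0` at time `t₀` and reaching `L` at time `t₀ + τ` with speed in
`[vmin, vmax]` is trapped, by the mean value theorem applied from both endpoints, between the
border trajectories `max (vmin (t - t₀)) (L - vmax (t₀ + τ - t))` and
`min (vmax (t - t₀)) (L - vmin (t₀ + τ - t))`. So on the common interval `xr` lies below the
upper border of `r`, which by assumption is strictly below the lower border of `f`, which lies
below `xf`. -/

theorem sub_mem_Icc_of_hasDerivAt_mem_Icc {f f' : ℝ → ℝ} {a b c C : ℝ}
    (hf : ∀ t ∈ Icc a b, HasDerivAt f (f' t) t) (hf' : ∀ t ∈ Icc a b, f' t ∈ Icc c C)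
    {x y : ℝ} (hx : x ∈ Icc a b) (hy : y ∈ Icc a b) (hxy : x ≤ y) :
    f y - f x ∈ Icc (c * (y - x)) (C * (y - x)) := by
  have hcont : ContinuousOn f (Icc a b) := fun t ht =>
    (hf t ht).continuousAt.continuousWithinAt
  have hdiff : DifferentiableOn ℝ f (interior (Icc a b)) := fun t ht =>
    (hf t (interior_subset ht)).differentiableAt.differentiableWithinAt
  have hderiv : ∀ t ∈ interior (Icc a b), deriv f t ∈ Icc c C := fun t ht =>
    (hf t (interior_subset ht)).deriv ▸ hf' t (interior_subset ht)
  exact ⟨(convex_Icc a b).mul_sub_le_image_sub_of_le_deriv hcont hdiff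
      (fun t ht => (hderiv t ht).1) x hx y hy hxy,
    (convex_Icc a b).image_sub_le_mul_sub_of_deriv_le hcont hdiff
      (fun t ht => (hderiv t ht).2) x hx y hy hxy⟩

theorem mem_Icc_border_of_hasDerivAt {x v : ℝ → ℝ} {L vmin vmax t₀ τ : ℝ}
    (hx : ∀ t ∈ Icc t₀ (t₀ + τ), HasDerivAt x (v t) t)
    (hv : ∀ t ∈ Icc t₀ (t₀ + τ), v t ∈ Icc vmin vmax)
    (hx₀ : x t₀ = 0) (hxL : x (t₀ + τ) = L) {t : ℝ} (ht : t ∈ Icc t₀ (t₀ + τ)) :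
    x t ∈ Icc (max (vmin * (t - t₀)) (L - vmax * (t₀ + τ - t)))
      (min (vmax * (t - t₀)) (L - vmin * (t₀ + τ - t))) := by
  have hstart : t₀ ∈ Icc t₀ (t₀ + τ) := ⟨le_rfl, ht.1.trans ht.2⟩
  have hend : t₀ + τ ∈ Icc t₀ (t₀ + τ) := ⟨ht.1.trans ht.2, le_rfl⟩
  have hbefore := sub_mem_Icc_of_hasDerivAt_mem_Icc hx hv hstart ht ht.1
  have hafter := sub_mem_Icc_of_hasDerivAt_mem_Icc hx hv ht hend ht.2
  rw [hx₀] at hbefore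
  rw [hxL] at hafter
  exact ⟨max_le (by linarith [hbefore.1]) (by linarith [hafter.2]),
    le_min (by linarith [hbefore.2]) (by linarith [hafter.1])⟩

theorem border_case_sufficiency_general
    (xf xr vfun wfun : ℝ → ℝ) (L vmin vmax tf tr τf τr : ℝ)
    (htt : tf ≤ tr)
    (hxf : ∀ t ∈ Set.Icc tf (tf + τf), HasDerivAt xf (vfun t) t)
    (hxr : ∀ t ∈ Set.Icc tr (tr + τr), HasDerivAt xr (wfun t) t)
    (hvf : ∀ t ∈ Set.Icc tf (tf + τf), vmin ≤ vfun t ∧ vfun t ≤ vmax)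
    (hvr : ∀ t ∈ Set.Icc tr (tr + τr), vmin ≤ wfun t ∧ wfun t ≤ vmax)
    (hxf0 : xf tf = 0) (hxfL : xf (tf + τf) = L)
    (hxr0 : xr tr = 0) (hxrL : xr (tr + τr) = L)
    (hborder : ∀ t ∈ Set.Icc tr (tf + τf),
      max (vmin * (t - tf)) (L - vmax * (tf + τf - t)) >
        min (vmax * (t - tr)) (L - vmin * (tr + τr - t))) :
    ∀ t ∈ Set.Icc tr (tf + τf) ∩ Set.Icc tr (tr + τr), xr t < xf t := by
  rintro t ⟨htf, htr⟩
  have hf := mem_Icc_border_of_hasDerivAt hxf hvf hxf0 hxfL ⟨htt.trans htf.1, htf.2⟩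
  have hr := mem_Icc_border_of_hasDerivAt hxr hvr hxr0 hxrL htr
  calc xr t ≤ min (vmax * (t - tr)) (L - vmin * (tr + τr - t)) := hr.2
    _ < max (vmin * (t - tf)) (L - vmax * (tf + τf - t)) := hborder t htf
    _ ≤ xf t := hf.1

theorem border_case_sufficiency
    (xf xr vfun wfun : ℝ → ℝ) (L vmin vmax tf tr τf τr : ℝ)
    (hvmin : 0 < vmin) (hvv : vmin ≤ vmax) (htt : tf ≤ tr)
    (hτf : 0 < τf) (hτr : 0 < τr)
    (hLf : vmin * τf ≤ L ∧ L ≤ vmax * τf)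
    (hLr : vmin * τr ≤ L ∧ L ≤ vmax * τr)
    (hxf : ∀ t ∈ Set.Icc tf (tf + τf), HasDerivAt xf (vfun t) t)
    (hxr : ∀ t ∈ Set.Icc tr (tr + τr), HasDerivAt xr (wfun t) t)
    (hvf : ∀ t ∈ Set.Icc tf (tf + τf), vmin ≤ vfun t ∧ vfun t ≤ vmax)
    (hvr : ∀ t ∈ Set.Icc tr (tr + τr), vmin ≤ wfun t ∧ wfun t ≤ vmax)
    (hxf0 : xf tf = 0) (hxfL : xf (tf + τf) = L)
    (hxr0 : xr tr = 0) (hxrL : xr (tr + τr) = L)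
    (hborder : ∀ t ∈ Set.Icc tr (tf + τf),
      max (vmin * (t - tf)) (L - vmax * (tf + τf - t)) >
        min (vmax * (t - tr)) (L - vmin * (tr + τr - t))) :
    ∀ t ∈ Set.Icc tr (tf + τf) ∩ Set.Icc tr (tr + τr), xr t < xf t :=
  border_case_sufficiency_general xf xr vfun wfun L vmin vmax tf tr τf τr htt hxf hxr hvf hvr hxf0
    hxfL hxr0 hxrL hborder
end

section
/- Safety under braking response within delay: let the front vehicle f brake with rate b_max < 0 from speed v_f until stopping, and let the rear vehicle r at initial separation d > d_RSS(v_f, v_r, ρ) travel with any acceleration bounded above by a_max during [0, ρ] and then brake with rate b_min (b_max ≤ b_min < 0) until stopping. Then the final position of r is strictly less than the final (stopped) position of f; in particular, x_f(stop) - x_r(stop) > 0. -/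
lemma nonneg_of_deriv_nonneg {f f' : ℝ → ℝ} {ρ : ℝ} (hρ : 0 ≤ ρ)
    (h0 : f 0 = 0)
    (hf : ∀ s ∈ Set.Icc (0:ℝ) ρ, HasDerivAt f (f' s) s)
    (hf' : ∀ s ∈ Set.Icc (0:ℝ) ρ, 0 ≤ f' s) : 0 ≤ f ρ := by
  have hcont : ContinuousOn f (Set.Icc 0 ρ) :=
    fun s hs => (hf s hs).continuousAt.continuousWithinAt
  have hmono : MonotoneOn f (Set.Icc 0 ρ) := by
    apply monotoneOn_of_hasDerivWithinAt_nonneg (convex_Icc 0 ρ) hcont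
    · intro x hx
      exact ((hf x (interior_subset hx)).hasDerivWithinAt)
    · intro x hx
      exact hf' x (interior_subset hx)
  have := hmono (Set.left_mem_Icc.2 hρ) (Set.right_mem_Icc.2 hρ) hρ
  linarith [this]

theorem rss_braking_response_safety
    (y w α : ℝ → ℝ) (xf xr vf vr bmax bmin amax ρ : ℝ)
    (hvf : 0 ≤ vf) (hvr : 0 ≤ vr) (hbmax : bmax < 0)
    (hbb : bmax ≤ bmin) (hbmin : bmin < 0) (hamax : 0 < amax) (hρ : 0 ≤ ρ)
    -- rear vehicle kinematics during the delay [0, ρ]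
    (hy0 : y 0 = xr) (hw0 : w 0 = vr)
    (hy : ∀ s ∈ Set.Icc (0:ℝ) ρ, HasDerivAt y (w s) s)
    (hw : ∀ s ∈ Set.Icc (0:ℝ) ρ, HasDerivAt w (α s) s)
    (hα : ∀ s ∈ Set.Icc (0:ℝ) ρ, α s ≤ amax)
    (hwpos : ∀ s ∈ Set.Icc (0:ℝ) ρ, 0 ≤ w s)
    -- initial separation exceeds the RSS distance
    (hsafe : xf - xr >
      vr * ρ + (1/2) * amax * ρ ^ 2
        - (vr + amax * ρ) ^ 2 / (2 * bmin) + vf ^ 2 / (2 * bmax)) :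
    -- front stops at xf - vf²/(2 bmax); rear stops at y ρ - (w ρ)²/(2 bmin)
    (xf - vf ^ 2 / (2 * bmax)) - (y ρ - (w ρ) ^ 2 / (2 * bmin)) > 0 := by
  -- speed bound at every time in [0, ρ]
  have hwle : ∀ s ∈ Set.Icc (0:ℝ) ρ, w s ≤ vr + amax * s := by
    intro s hs
    obtain ⟨hs0, hsρ⟩ := hs
    have hsub : Set.Icc (0:ℝ) s ⊆ Set.Icc 0 ρ :=
      Set.Icc_subset_Icc le_rfl hsρ
    have h0 := nonneg_of_deriv_nonneg (f := fun t => vr + amax * t - w t)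
      (f' := fun t => amax - α t) hs0
      (by simp [hw0])
      (fun t ht => by
        have h := ((hasDerivAt_const t vr).add
          ((hasDerivAt_id t).const_mul amax)).sub (hw t (hsub ht))
        exact h.congr_deriv (by ring))
      (fun t ht => by show (0:ℝ) ≤ amax - α t; linarith [hα t (hsub ht)])
    have : (0:ℝ) ≤ vr + amax * s - w s := h0
    linarith
  -- position bound at ρ
  have hyle : y ρ ≤ xr + vr * ρ + (1/2) * amax * ρ ^ 2 := by
    have := nonneg_of_deriv_nonneg
      (f := fun t => xr + vr * t + (1/2) * amax * t ^ 2 - y t)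
      (f' := fun t => vr + amax * t - w t) hρ
      (by simp [hy0])
      (fun t ht => by
        have h1 : HasDerivAt (fun t : ℝ => xr + vr * t + (1/2) * amax * t ^ 2)
            (vr + amax * t) t := by
          have := (((hasDerivAt_pow 2 t).const_mul ((1/2) * amax)).const_add
            (vr * t))
          exact ((((hasDerivAt_id t).const_mul vr).const_add xr).add
            (((hasDerivAt_pow 2 t).const_mul ((1/2) * amax)))).congr_deriv
            (by norm_num <;> ring)
        exact h1.sub (hy t ht))
      (fun t ht => by show (0:ℝ) ≤ vr + amax * t - w t; linarith [hwle t ht])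
    have h1 : (0:ℝ) ≤ xr + vr * ρ + (1/2) * amax * ρ ^ 2 - y ρ := this
    linarith
  have hA : 0 ≤ vr + amax * ρ := by positivity
  have hwρ0 : 0 ≤ w ρ := hwpos ρ (Set.right_mem_Icc.2 hρ)
  have hwρle : w ρ ≤ vr + amax * ρ := hwle ρ (Set.right_mem_Icc.2 hρ)
  have hsq : (w ρ) ^ 2 ≤ (vr + amax * ρ) ^ 2 := by nlinarith
  have hdiv : -(w ρ) ^ 2 / (2 * bmin) ≤ -(vr + amax * ρ) ^ 2 / (2 * bmin) := by
    apply div_le_div_of_nonpos_of_le (by linarith)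
    linarith
  rw [neg_div, neg_div] at hdiv
  linarith
end
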